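/- For k ≥ 2, the hyperbinary expansions of 2^k are exactly: 1 followed by k zeros; 2 followed by k−1 zeros; and, for each 0 < h < k, a block of h ones followed by a 2 followed by k−h−1 zeros. In particular b(2^k) = k+1. -/

import Mathlib

/-- The integer represented by a word of digits (most significant first). -/
def hval (w : List ℕ) : ℕ := w.foldl (fun a d => 2 * a + d) 0

/-- `w` is a hyperbinary expansion of `n`: digits in {0,1,2}, nonzero leading
digit, representing `n`.  (The empty word is the unique expansion of `0`.) -/
def IsHyp (n : ℕ) (w : List ℕ) : Prop :=
  (∀ d ∈ w, d ≤ 2) ∧ w.head? ≠ some 0 ∧ hval w = n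

/-- `b n`: the number of hyperbinary expansions of `n` (so `b 0 = 1`). -/
noncomputable def hb (n : ℕ) : ℕ := Set.ncard {w : List ℕ | IsHyp n w}

/-- A single rewriting step: `02 → 10` or `12 → 20`, a leading `2` treated as `02`. -/
def Step (u v : List ℕ) : Prop :=
  (∃ x y : List ℕ, u = x ++ [0, 2] ++ y ∧ v = x ++ [1, 0] ++ y) ∨
  (∃ x y : List ℕ, u = x ++ [1, 2] ++ y ∧ v = x ++ [2, 0] ++ y) ∨
  (∃ y : List ℕ, u = 2 :: y ∧ v = 1 :: 0 :: y)

/-- Strict shortlex order: first by length, then lexicographically. -/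
def Shortlex (u v : List ℕ) : Prop :=
  u.length < v.length ∨ (u.length = v.length ∧ List.Lex (· < ·) u v)

/-- Number of maximal blocks of consecutive `2`'s in a word. -/
def blocks2 : List ℕ → ℕ
  | [] => 0
  | d :: rest => blocks2 rest + (if d = 2 ∧ rest.head? ≠ some 2 then 1 else 0)

/-!
A word of `n + 1` digits in `{0, 1, 2}` with nonzero leading digit has value between `2 ^ n` and
`2 ^ (n + 2) - 2`, so an expansion of `2 ^ k` has `k + 1` or `k` digits. With `k + 1` digits it
must be `1 0 … 0`. A word of `k` digits with value `2 ^ k` is handled by induction on `k`: a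
leading `1` leaves a shorter word of the same kind, a leading `2` leaves a word of value `0`, and a
leading `0` is impossible; this gives `1 … 1 2 0 … 0`.
-/

open List

lemma foldl_eq_mul_two_pow_add_hval (w : List ℕ) (a : ℕ) :
    w.foldl (fun a d => 2 * a + d) a = a * 2 ^ w.length + hval w := by
  induction w generalizing a with
  | nil => simp [hval]
  | cons d t ih =>
    simp only [hval, foldl_cons, length_cons, ih (2 * a + d), ih (2 * 0 + d), pow_succ]
    ring

lemma hval_append (u v : List ℕ) : hval (u ++ v) = hval u * 2 ^ v.length + hval v := by
  rw [hval, foldl_append, foldl_eq_mul_two_pow_add_hval, ← hval]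

lemma hval_cons (d : ℕ) (t : List ℕ) : hval (d :: t) = d * 2 ^ t.length + hval t := by
  rw [← singleton_append, hval_append]
  simp [hval]

@[simp]
lemma hval_replicate_zero (m : ℕ) : hval (replicate m 0) = 0 := by
  induction m with
  | zero => rfl
  | succ m ih => rw [replicate_succ, hval_cons, ih]; ring

lemma hval_replicate_one_add_one (m : ℕ) : hval (replicate m 1) + 1 = 2 ^ m := by
  induction m with
  | zero => rfl
  | succ m ih => rw [replicate_succ, hval_cons, length_replicate, pow_succ, ← ih]; ring

lemma hval_ones_two_zeros (h z : ℕ) :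
    hval (replicate h 1 ++ [2] ++ replicate z 0) = 2 ^ (h + 1 + z) := by
  rw [hval_append, hval_append, hval_replicate_zero, length_replicate, pow_add, pow_add,
    ← hval_replicate_one_add_one h, show hval [2] = 2 from rfl, length_singleton]
  ring

lemma hval_add_two_le {w : List ℕ} (hw : ∀ d ∈ w, d ≤ 2) :
    hval w + 2 ≤ 2 ^ (w.length + 1) := by
  induction w with
  | nil => simp [hval]
  | cons d t ih =>
    have hd : d ≤ 2 := hw d mem_cons_self
    have ht := ih fun x hx => hw x (mem_cons_of_mem _ hx)
    rw [hval_cons, length_cons, pow_succ, pow_succ]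
    rw [pow_succ] at ht
    nlinarith [Nat.mul_le_mul_right (2 ^ t.length) hd]

lemma eq_replicate_zero_of_hval_eq_zero {w : List ℕ} (h : hval w = 0) :
    w = replicate w.length 0 := by
  induction w with
  | nil => rfl
  | cons d t ih =>
    rw [hval_cons, Nat.add_eq_zero_iff, mul_eq_zero] at h
    obtain ⟨hd | hpow, ht⟩ := h
    · rw [length_cons, replicate_succ, hd, ← ih ht]
    · exact absurd hpow (by positivity)

lemma eq_ones_two_zeros_of_hval_eq_two_pow_length {w : List ℕ} (hw : ∀ d ∈ w, d ≤ 2)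
    (hv : hval w = 2 ^ w.length) :
    ∃ h < w.length, w = replicate h 1 ++ [2] ++ replicate (w.length - h - 1) 0 := by
  induction w with
  | nil => simp [hval] at hv
  | cons d t ih =>
    have hdt : ∀ x ∈ t, x ≤ 2 := fun x hx => hw x (mem_cons_of_mem _ hx)
    have ht := hval_add_two_le hdt
    rw [hval_cons, length_cons, pow_succ] at hv
    rw [pow_succ] at ht
    have hd := hw d mem_cons_self
    interval_cases d
    · omega
    · obtain ⟨h, hh, ht⟩ := ih hdt (by omega)
      refine ⟨h + 1, by rw [length_cons]; omega, ?_⟩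
      rw [ht]
      simp [replicate_succ]
    · refine ⟨0, by simp, ?_⟩
      rw [eq_replicate_zero_of_hval_eq_zero (show hval t = 0 by omega)]
      simp

lemma two_pow_length_le_hval_cons {d : ℕ} (hd : d ≠ 0) (t : List ℕ) :
    2 ^ t.length ≤ hval (d :: t) := by
  rw [hval_cons]
  nlinarith [Nat.mul_le_mul_right (2 ^ t.length) (Nat.one_le_iff_ne_zero.2 hd)]

lemma length_tail_eq_or_of_isHyp_two_pow {k d : ℕ} {t : List ℕ} (hH : IsHyp (2 ^ k) (d :: t)) :
    t.length = k ∨ t.length + 1 = k := by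
  obtain ⟨hw, hhead, hv⟩ := hH
  have hle : t.length ≤ k := by
    rw [← Nat.pow_le_pow_iff_right (le_refl 2), ← hv]
    exact two_pow_length_le_hval_cons (by simpa using hhead) t
  have hlt : k < t.length + 1 + 1 := by
    rw [← Nat.pow_lt_pow_iff_right (by norm_num : 1 < 2), ← hv]
    have := hval_add_two_le hw
    rw [length_cons] at this
    omega
  omega

lemma isHyp_two_pow_iff {k : ℕ} {w : List ℕ} :
    IsHyp (2 ^ k) w ↔
      w = 1 :: replicate k 0 ∨ ∃ h < k, w = replicate h 1 ++ [2] ++ replicate (k - h - 1) 0 := by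
  constructor
  · intro hH
    rcases w with _ | ⟨d, t⟩
    · exact absurd hH.2.2.symm (by simp [hval])
    have hlen := length_tail_eq_or_of_isHyp_two_pow hH
    obtain ⟨hw, hhead, hv⟩ := hH
    rcases hlen with hk | hk
    · rw [hval_cons, hk] at hv
      have hd : d ≠ 0 := by simpa using hhead
      have hd1 : d ≤ 1 :=
        Nat.le_of_mul_le_mul_right (show d * 2 ^ k ≤ 1 * 2 ^ k by omega) (by positivity)
      obtain rfl : d = 1 := by omega
      left
      rw [eq_replicate_zero_of_hval_eq_zero (show hval t = 0 by omega), hk]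
    · have hv' : hval (d :: t) = 2 ^ (d :: t).length := by rw [hv, ← hk, length_cons]
      obtain ⟨h, hh, heq⟩ := eq_ones_two_zeros_of_hval_eq_two_pow_length hw hv'
      rw [length_cons, hk] at hh heq
      exact Or.inr ⟨h, hh, heq⟩
  · rintro (rfl | ⟨h, hh, rfl⟩)
    · refine ⟨?_, by simp, by simp [hval_cons]⟩
      intro d hd
      simp only [mem_cons, mem_replicate] at hd
      omega
    · refine ⟨?_, ?_, ?_⟩
      · intro d hd
        simp only [append_assoc, mem_append, mem_replicate, mem_singleton] at hd
        omega
      · cases h <;> simp [replicate_succ]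
      · rw [hval_ones_two_zeros]
        congr 1
        omega

lemma setOf_isHyp_two_pow (k : ℕ) :
    {w | IsHyp (2 ^ k) w} = insert (1 :: replicate k 0)
      ((fun h => replicate h 1 ++ [2] ++ replicate (k - h - 1) 0) '' Set.Iio k) := by
  ext w
  simp [isHyp_two_pow_iff, eq_comm (a := w)]

lemma hb_two_pow (k : ℕ) : hb (2 ^ k) = k + 1 := by
  set word : ℕ → List ℕ := fun h => replicate h 1 ++ [2] ++ replicate (k - h - 1) 0
  have hinj : word.Injective := fun a b hab => by
    simpa [word, count_replicate] using congrArg (count 1) hab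
  have hnotMem : 1 :: replicate k 0 ∉ word '' Set.Iio k := by
    rintro ⟨h, hh, heq⟩
    have := congrArg length heq
    simp only [word, length_append, length_replicate, length_cons, length_nil] at this
    simp only [Set.mem_Iio] at hh
    omega
  rw [hb, setOf_isHyp_two_pow, Set.ncard_insert_of_notMem hnotMem ((Set.finite_Iio k).image word),
    Set.ncard_image_of_injective _ hinj, Set.ncard_Iio_nat]

theorem stmt11 (k : ℕ) (hk : 2 ≤ k) :
    {w : List ℕ | IsHyp (2 ^ k) w} =
      {1 :: List.replicate k 0} ∪ {2 :: List.replicate (k - 1) 0} ∪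
      {w : List ℕ | ∃ h : ℕ, 0 < h ∧ h < k ∧
        w = List.replicate h 1 ++ [2] ++ List.replicate (k - h - 1) 0} ∧
    hb (2 ^ k) = k + 1 := by
  refine ⟨?_, hb_two_pow k⟩
  ext w
  simp only [Set.mem_ofPred_eq, isHyp_two_pow_iff, Set.mem_union, Set.mem_singleton_iff]
  constructor
  · rintro (rfl | ⟨_ | h, hh, rfl⟩)
    · exact Or.inl (Or.inl rfl)
    · exact Or.inl (Or.inr (by simp))
    · exact Or.inr ⟨h + 1, h.succ_pos, hh, rfl⟩
  · rintro ((rfl | rfl) | ⟨h, -, hh, rfl⟩)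
    · exact Or.inl rfl
    · exact Or.inr ⟨0, by omega, by simp⟩
    · exact Or.inr ⟨h, hh, rfl⟩
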